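/- Let K = ℓ²(ℕ) (indexed from n = 1) and let H = (K ⊕ K) ⊕ (K ⊕ K). Let G₁ = {((x, u), (y, v)) ∈ H : y_n = n² x_n and v_n = u_n/n² for all n} and G₂ = {((x, u), (y, v)) ∈ H : y_n = n³ x_n and v_n = u_n/n³ for all n}; these are closed subspaces of H (the graphs of the closed operators A ⊕ C and B ⊕ D, where A, B, C, D are the diagonal operators with diagonals (n²)_n, (n³)_n, (1/n²)_n, (1/n³)_n respectively). Then the systems (H; (K ⊕ K) ⊕ 0, G₁) and (H; (K ⊕ K) ⊕ 0, G₂) are not boundedly isomorphic. -/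

import Mathlib

/- STATEMENT 16: On K = ℓ²(ℕ) (indexed from 1) and H = (K ⊕ K) ⊕ (K ⊕ K), let
G₁ = {((x,u),(y,v)) : yₙ = n² xₙ, vₙ = uₙ/n²} (the graph of A ⊕ C) and
G₂ = {((x,u),(y,v)) : yₙ = n³ xₙ, vₙ = uₙ/n³} (the graph of B ⊕ D). Then
(H; (K ⊕ K) ⊕ 0, G₁) and (H; (K ⊕ K) ⊕ 0, G₂) are not boundedly isomorphic.
(Indexing: Lean's n : ℕ corresponds to the paper's n + 1.) -/

noncomputable section

abbrev K : Type := lp (fun _ : ℕ => ℂ) 2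

/-- The graph of the direct sum of the diagonal operators with diagonals `a` and `b`,
as a subspace of (K × K) × (K × K). -/
def sumDiagGraph (a b : ℕ → ℂ) : Submodule ℂ ((K × K) × (K × K)) where
  carrier := {p | (∀ n, p.2.1 n = a n * p.1.1 n) ∧ (∀ n, p.2.2 n = b n * p.1.2 n)}
  add_mem' := by
    rintro p q ⟨hp1, hp2⟩ ⟨hq1, hq2⟩
    refine ⟨fun n => ?_, fun n => ?_⟩ <;>
      · simp only [Prod.snd_add, Prod.fst_add, lp.coeFn_add, Pi.add_apply,
          hp1 n, hp2 n, hq1 n, hq2 n]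
        ring
  zero_mem' := ⟨fun n => by simp [lp.coeFn_zero], fun n => by simp [lp.coeFn_zero]⟩
  smul_mem' := by
    rintro c p ⟨hp1, hp2⟩
    refine ⟨fun n => ?_, fun n => ?_⟩ <;>
      · simp only [Prod.smul_snd, Prod.smul_fst, lp.coeFn_smul, Pi.smul_apply,
          hp1 n, hp2 n, smul_eq_mul]
        ring

/-!
A bounded isomorphism `V` preserves `(K × K) × 0`, so the second component of `V z` depends only
on that of `z`, with norm at most `‖V‖ ‖z.2‖`. With `Dₑ = diag ((n + 1)⁻ᵉ)`, the graph of exponent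
`e` is the image of the injective map `(y, u) ↦ ((Dₑ y, u), (y, Dₑ u))`, whose second component is
`Aₑ = 1 ⊕ Dₑ`. Hence `V` and `V⁻¹` induce bounded operators `X`, `Y` on `K × K` with `Y X = 1`,
`‖A₃ X p‖ ≤ ‖V‖ ‖A₂ p‖` and `‖A₂ Y p‖ ≤ ‖V⁻¹‖ ‖A₃ p‖`.

By a dimension count there is `u ≠ 0` supported on `[M, 2M]` such that `η = X (0, u)` has second
component vanishing below `M`. As `‖A₂ (0, u)‖ ≤ (M + 1)⁻² ‖u‖`, the first component of `η` is
`O(M⁻²) ‖u‖`, and its second component lives where `D₃ ≤ (M + 1)⁻³`. So `ζ = Y (0, η.2)` is within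
`O(M⁻²) ‖u‖` of `(0, u)` while `‖D₂ ζ.2‖ = O(M⁻³) ‖u‖`; since `D₂ ≥ (2M + 2)⁻²` on `[M, 2M]`, this
gives `‖u‖ = O(M⁻¹) ‖u‖`, impossible for large `M`.
-/

open scoped ENNReal

namespace lp

variable {α : Type*} {E : α → Type*} [∀ i, NormedAddCommGroup (E i)] {p : ℝ≥0∞} [Fact (1 ≤ p)]

theorem norm_le_norm_add_mul_norm_of_forall_le {F G : α → Type*} [∀ i, NormedAddCommGroup (F i)]
    [∀ i, NormedAddCommGroup (G i)] {x : lp E p} {y : lp F p} {z : lp G p} {r : ℝ} (hr : 0 ≤ r)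
    (h : ∀ i, ‖x i‖ ≤ ‖y i‖ + r * ‖z i‖) : ‖x‖ ≤ ‖y‖ + r * ‖z‖ := by
  have hp : p ≠ 0 := (zero_lt_one.trans_le Fact.out).ne'
  calc ‖x‖ ≤ ‖toNorm y + r • toNorm z‖ :=
        norm_mono hp fun i => (h i).trans (Real.le_norm_self _)
    _ ≤ ‖y‖ + r * ‖z‖ := by
        refine (norm_add_le _ _).trans ?_
        rw [norm_smul, norm_toNorm, norm_toNorm, Real.norm_of_nonneg hr]

theorem norm_le_mul_norm_of_forall_le {F : α → Type*} [∀ i, NormedAddCommGroup (F i)]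
    {x : lp E p} {z : lp F p} {r : ℝ} (hr : 0 ≤ r) (h : ∀ i, ‖x i‖ ≤ r * ‖z i‖) :
    ‖x‖ ≤ r * ‖z‖ := by
  simpa using norm_le_norm_add_mul_norm_of_forall_le (y := (0 : lp E p)) hr (by simpa using h)

end lp

theorem lp.exists_ne_zero_support_subset_of_card_lt {ι κ 𝕜 : Type*} [NormedField 𝕜]
    {p q : ℝ≥0∞} (L : lp (fun _ : ι => 𝕜) p →ₗ[𝕜] lp (fun _ : κ => 𝕜) q) (F : Finset ι)
    (G : Finset κ) (hGF : G.card < F.card) :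
    ∃ u : lp (fun _ : ι => 𝕜) p, u ≠ 0 ∧ Function.support u ⊆ F ∧ ∀ j ∈ G, L u j = 0 := by
  classical
  let extend : (F → 𝕜) →ₗ[𝕜] lp (fun _ : ι => 𝕜) p :=
    { toFun a := ⟨fun i => if h : i ∈ F then a ⟨i, h⟩ else 0,
        (memℓp_zero (F.finite_toSet.subset fun i hi => by_contra fun hiF => hi (dif_neg hiF))
          ).of_exponent_ge (by simp)⟩
      map_add' a b := by ext i; rw [lp.coeFn_add]; by_cases h : i ∈ F <;> simp [h]
      map_smul' c a := by ext i; by_cases h : i ∈ F <;> simp [h] }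
  let restrict : lp (fun _ : κ => 𝕜) q →ₗ[𝕜] (G → 𝕜) :=
    LinearMap.pi fun j : G => lp.evalₗ _ q (j : κ)
  have hker : LinearMap.ker (restrict ∘ₗ L ∘ₗ extend) ≠ ⊥ :=
    LinearMap.ker_ne_bot_of_finrank_lt (by simpa using hGF)
  obtain ⟨a, ha, ha0⟩ := (Submodule.ne_bot_iff _).1 hker
  have hextend (i : ι) : extend a i = if h : i ∈ F then a ⟨i, h⟩ else 0 := rfl
  refine ⟨extend a, ?_, ?_, fun j hj => congr_fun (LinearMap.mem_ker.1 ha) ⟨j, hj⟩⟩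
  · obtain ⟨i, hi⟩ := Function.ne_iff.1 ha0
    intro h0
    apply hi
    simpa [h0, i.2] using (hextend i).symm
  · intro i hi
    rw [Function.mem_support, hextend] at hi
    by_contra hiF
    exact hi (dif_neg hiF)

theorem Complex.norm_natCast_add_one (n : ℕ) : ‖(n : ℂ) + 1‖ = n + 1 :=
  mod_cast Complex.norm_natCast (n + 1)

def diagInvPow (e : ℕ) : K →L[ℂ] K :=
  lp.mapCLM 2 (fun n => (((n : ℂ) + 1) ^ e)⁻¹ • ContinuousLinearMap.id ℂ ℂ) zero_le_one fun n => by
    refine (norm_smul_le _ _).trans (mul_le_one₀ ?_ (norm_nonneg _) ContinuousLinearMap.norm_id_le)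
    rw [norm_inv, norm_pow, Complex.norm_natCast_add_one]
    exact inv_le_one_of_one_le₀ (one_le_pow₀ (by simp))

theorem diagInvPow_apply (e : ℕ) (x : K) (n : ℕ) :
    diagInvPow e x n = (((n : ℂ) + 1) ^ e)⁻¹ * x n := by
  simp [diagInvPow]

theorem norm_diagInvPow_apply (e : ℕ) (x : K) (n : ℕ) :
    ‖diagInvPow e x n‖ = ‖x n‖ / ((n : ℝ) + 1) ^ e := by
  rw [diagInvPow_apply, norm_mul, norm_inv, norm_pow, Complex.norm_natCast_add_one,
    div_eq_inv_mul]

theorem norm_diagInvPow_le_of_forall_lt_eq_zero {e M : ℕ} {x : K} (hx : ∀ n < M, x n = 0) :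
    ‖diagInvPow e x‖ ≤ (((M : ℝ) + 1) ^ e)⁻¹ * ‖x‖ :=
  lp.norm_le_mul_norm_of_forall_le (by positivity) fun n => by
    rw [norm_diagInvPow_apply]
    rcases lt_or_ge n M with hn | hn
    · simp [hx n hn]
    · rw [div_eq_inv_mul]
      gcongr

theorem norm_le_norm_sub_add_mul_norm_diagInvPow {e M : ℕ} {u : K}
    (hu : Function.support u ⊆ Finset.Icc M (2 * M)) (w : K) :
    ‖u‖ ≤ ‖u - w‖ + (2 * ((M : ℝ) + 1)) ^ e * ‖diagInvPow e w‖ :=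
  lp.norm_le_norm_add_mul_norm_of_forall_le (by positivity) fun n => by
    by_cases hn : n ∈ Finset.Icc M (2 * M)
    · have hnM : (n : ℝ) + 1 ≤ 2 * ((M : ℝ) + 1) := by
        have : (n : ℝ) ≤ 2 * M := by exact_mod_cast (Finset.mem_Icc.1 hn).2
        linarith
      have hw : ‖w n‖ ≤ (2 * ((M : ℝ) + 1)) ^ e * ‖diagInvPow e w n‖ := by
        rw [norm_diagInvPow_apply, mul_div_assoc', le_div_iff₀ (by positivity), mul_comm]
        gcongr
      calc ‖u n‖ ≤ ‖u n - w n‖ + ‖w n‖ := norm_le_norm_sub_add _ _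
        _ ≤ ‖(u - w) n‖ + (2 * ((M : ℝ) + 1)) ^ e * ‖diagInvPow e w n‖ := by
          rw [lp.coeFn_sub, Pi.sub_apply]
          gcongr
    · rw [Function.notMem_support.1 fun h => hn (hu h), norm_zero]
      positivity

theorem Equiv.mapsTo_symm_of_image_eq {α β : Type*} (V : α ≃ β) {s : Set α} {t : Set β}
    (h : V '' s = t) : Set.MapsTo V.symm t s := by
  subst h
  rintro _ ⟨y, hy, rfl⟩
  simpa using hy

theorem norm_snd_apply_le_of_mapsTo {𝕜 E F : Type*} [NontriviallyNormedField 𝕜]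
    [SeminormedAddCommGroup E] [NormedSpace 𝕜 E] [SeminormedAddCommGroup F] [NormedSpace 𝕜 F]
    (T : E × F →L[𝕜] E × F)
    (hT : Set.MapsTo T ((⊤ : Submodule 𝕜 E).prod (⊥ : Submodule 𝕜 F))
      ((⊤ : Submodule 𝕜 E).prod (⊥ : Submodule 𝕜 F))) (z : E × F) :
    ‖(T z).2‖ ≤ ‖T‖ * ‖z.2‖ := by
  have hfst : (T (z.1, 0)).2 = 0 := (Submodule.mem_prod.1 (hT (by simp))).2
  have hsplit : T z = T (z.1, 0) + T (0, z.2) := by rw [← map_add, Prod.mk_add_mk, add_zero, zero_add]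
  calc ‖(T z).2‖ = ‖(T (0, z.2)).2‖ := by rw [hsplit, Prod.snd_add, hfst, zero_add]
    _ ≤ ‖T (0, z.2)‖ := norm_snd_le _
    _ ≤ ‖T‖ * ‖((0 : E), z.2)‖ := T.le_opNorm _
    _ = ‖T‖ * ‖z.2‖ := by simp

def diagInvPowSnd (e : ℕ) : K × K →L[ℂ] K × K :=
  (ContinuousLinearMap.id ℂ K).prodMap (diagInvPow e)

def graphParam (e : ℕ) : K × K →L[ℂ] (K × K) × (K × K) :=
  ((diagInvPow e).prodMap (ContinuousLinearMap.id ℂ K)).prod (diagInvPowSnd e)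

def graphCoord : (K × K) × (K × K) →L[ℂ] K × K :=
  ((ContinuousLinearMap.fst ℂ K K).comp (ContinuousLinearMap.snd ℂ _ _)).prod
    ((ContinuousLinearMap.snd ℂ K K).comp (ContinuousLinearMap.fst ℂ _ _))

def powGraph (e : ℕ) : Submodule ℂ ((K × K) × (K × K)) :=
  sumDiagGraph (fun n : ℕ => ((n : ℂ) + 1) ^ e) (fun n : ℕ => 1 / ((n : ℂ) + 1) ^ e)

theorem graphCoord_graphParam (e : ℕ) (p : K × K) : graphCoord (graphParam e p) = p := rfl

theorem snd_graphParam (e : ℕ) (p : K × K) : (graphParam e p).2 = diagInvPowSnd e p := rfl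

theorem graphParam_mem_powGraph (e : ℕ) (p : K × K) : graphParam e p ∈ powGraph e := by
  refine ⟨fun n => ?_, fun n => ?_⟩ <;>
    simp [graphParam, diagInvPowSnd, diagInvPow_apply, Nat.cast_add_one_ne_zero]

theorem graphParam_graphCoord_of_mem {e : ℕ} {z : (K × K) × (K × K)} (hz : z ∈ powGraph e) :
    graphParam e (graphCoord z) = z := by
  obtain ⟨hz₁, hz₂⟩ := hz
  ext n
  · simp [graphParam, graphCoord, diagInvPow_apply, hz₁, Nat.cast_add_one_ne_zero]
  · rfl
  · rfl
  · simp [graphParam, graphCoord, diagInvPowSnd, diagInvPow_apply, hz₂]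

theorem norm_diagInvPowSnd_graphCoord_le {e f : ℕ}
    (T : (K × K) × (K × K) →L[ℂ] (K × K) × (K × K))
    (hT : Set.MapsTo T ((⊤ : Submodule ℂ (K × K)).prod (⊥ : Submodule ℂ (K × K)))
      ((⊤ : Submodule ℂ (K × K)).prod (⊥ : Submodule ℂ (K × K))))
    (hG : Set.MapsTo T (powGraph e) (powGraph f)) (p : K × K) :
    ‖diagInvPowSnd f (graphCoord (T (graphParam e p)))‖ ≤ ‖T‖ * ‖diagInvPowSnd e p‖ := by
  rw [← snd_graphParam, graphParam_graphCoord_of_mem (hG (graphParam_mem_powGraph e p)),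
    ← snd_graphParam]
  exact norm_snd_apply_le_of_mapsTo T hT _

theorem norm_le_of_leftInverse {e f M : ℕ} {X Y : K × K →L[ℂ] K × K} {a b : ℝ}
    (ha : 0 ≤ a) (hb : 0 ≤ b)
    (hX : ∀ p, ‖diagInvPowSnd f (X p)‖ ≤ a * ‖diagInvPowSnd e p‖)
    (hY : ∀ p, ‖diagInvPowSnd e (Y p)‖ ≤ b * ‖diagInvPowSnd f p‖)
    (hYX : Function.LeftInverse Y X) {u : K} (hu : Function.support u ⊆ Finset.Icc M (2 * M))
    (hXu : ∀ n < M, (X (0, u)).2 n = 0) :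
    ‖u‖ ≤ (a * ‖Y‖ * (((M : ℝ) + 1) ^ e)⁻¹ +
      (2 * ((M : ℝ) + 1)) ^ e * b * ‖X‖ * (((M : ℝ) + 1) ^ f)⁻¹) * ‖u‖ := by
  set R : ℝ := (M : ℝ) + 1
  have hu_lt : ∀ n < M, u n = 0 := fun n hn =>
    Function.notMem_support.1 fun h => by have := Finset.mem_Icc.1 (hu h); omega
  set η := X (0, u)
  have hη₁ : ‖η.1‖ ≤ a * ((R ^ e)⁻¹ * ‖u‖) := calc
    ‖η.1‖ ≤ ‖diagInvPowSnd f η‖ := norm_fst_le (diagInvPowSnd f η)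
    _ ≤ a * ‖diagInvPowSnd e (0, u)‖ := hX _
    _ = a * ‖diagInvPow e u‖ := by simp [diagInvPowSnd]
    _ ≤ a * ((R ^ e)⁻¹ * ‖u‖) := by gcongr; exact norm_diagInvPow_le_of_forall_lt_eq_zero hu_lt
  set ζ := Y (0, η.2)
  have hζ : ‖diagInvPow e ζ.2‖ ≤ b * ((R ^ f)⁻¹ * (‖X‖ * ‖u‖)) := calc
    ‖diagInvPow e ζ.2‖ ≤ ‖diagInvPowSnd e ζ‖ := norm_snd_le (diagInvPowSnd e ζ)
    _ ≤ b * ‖diagInvPowSnd f (0, η.2)‖ := hY _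
    _ = b * ‖diagInvPow f η.2‖ := by simp [diagInvPowSnd]
    _ ≤ b * ((R ^ f)⁻¹ * ‖η.2‖) := by
      gcongr
      exact norm_diagInvPow_le_of_forall_lt_eq_zero hXu
    _ ≤ b * ((R ^ f)⁻¹ * (‖X‖ * ‖u‖)) := by
      gcongr
      calc ‖η.2‖ ≤ ‖η‖ := norm_snd_le η
        _ ≤ ‖X‖ * ‖((0 : K), u)‖ := X.le_opNorm _
        _ = ‖X‖ * ‖u‖ := by simp
  have hsub : ‖u - ζ.2‖ ≤ ‖Y‖ * (a * ((R ^ e)⁻¹ * ‖u‖)) := by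
    have hsplit : (Y (η.1, 0)).2 + ζ.2 = u := by
      rw [← Prod.snd_add, ← map_add, Prod.mk_add_mk, add_zero, zero_add, hYX (0, u)]
    calc ‖u - ζ.2‖ = ‖(Y (η.1, 0)).2‖ := by rw [← hsplit, add_sub_cancel_right]
      _ ≤ ‖Y (η.1, 0)‖ := norm_snd_le _
      _ ≤ ‖Y‖ * ‖(η.1, (0 : K))‖ := Y.le_opNorm _
      _ = ‖Y‖ * ‖η.1‖ := by simp
      _ ≤ ‖Y‖ * (a * ((R ^ e)⁻¹ * ‖u‖)) := by gcongr
  calc ‖u‖ ≤ ‖u - ζ.2‖ + (2 * R) ^ e * ‖diagInvPow e ζ.2‖ :=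
        norm_le_norm_sub_add_mul_norm_diagInvPow hu _
    _ ≤ ‖Y‖ * (a * ((R ^ e)⁻¹ * ‖u‖)) + (2 * R) ^ e * (b * ((R ^ f)⁻¹ * (‖X‖ * ‖u‖))) := by
        gcongr
    _ = _ := by ring

theorem not_leftInverse_of_norm_diagInvPowSnd_le {e f : ℕ} (he : 1 ≤ e) (hef : e < f)
    {X Y : K × K →L[ℂ] K × K} {a b : ℝ} (ha : 0 ≤ a) (hb : 0 ≤ b)
    (hX : ∀ p, ‖diagInvPowSnd f (X p)‖ ≤ a * ‖diagInvPowSnd e p‖)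
    (hY : ∀ p, ‖diagInvPowSnd e (Y p)‖ ≤ b * ‖diagInvPowSnd f p‖) :
    ¬ Function.LeftInverse Y X := by
  intro hYX
  obtain ⟨M, hM⟩ := exists_nat_gt (a * ‖Y‖ + 2 ^ e * b * ‖X‖)
  obtain ⟨u, hu0, hu, hXu⟩ := lp.exists_ne_zero_support_subset_of_card_lt
    ((ContinuousLinearMap.snd ℂ K K).comp (X.comp (ContinuousLinearMap.inr ℂ K K))).toLinearMap
    (Finset.Icc M (2 * M)) (Finset.range M) (by simp; omega)
  have hu_le := norm_le_of_leftInverse ha hb hX hY hYX hu fun n hn => hXu n (Finset.mem_range.2 hn)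
  set R : ℝ := (M : ℝ) + 1
  have hR : 1 ≤ R := by simp [R]
  have hRe : (R ^ e)⁻¹ ≤ R⁻¹ := inv_anti₀ (by positivity) (le_self_pow₀ hR (by omega))
  have hRef : R ^ e * (R ^ f)⁻¹ ≤ R⁻¹ := by
    rw [← div_eq_mul_inv, div_le_iff₀ (by positivity), ← div_eq_inv_mul, le_div_iff₀ (by positivity),
      ← pow_succ]
    exact pow_le_pow_right₀ hR hef
  have hcoef : a * ‖Y‖ * (R ^ e)⁻¹ + (2 * R) ^ e * b * ‖X‖ * (R ^ f)⁻¹ < 1 := calc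
    _ = a * ‖Y‖ * (R ^ e)⁻¹ + 2 ^ e * b * ‖X‖ * (R ^ e * (R ^ f)⁻¹) := by rw [mul_pow]; ring
    _ ≤ a * ‖Y‖ * R⁻¹ + 2 ^ e * b * ‖X‖ * R⁻¹ := by gcongr
    _ = (a * ‖Y‖ + 2 ^ e * b * ‖X‖) / R := by ring
    _ < 1 := (div_lt_one (by positivity)).2 (hM.trans (by simp [R]))
  exact (mul_lt_of_lt_one_left (norm_pos_iff.2 hu0) hcoef).not_ge hu_le

theorem squares_and_cubes_sum_graphs_not_boundedly_isomorphic :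
    ¬ ∃ V : ((K × K) × (K × K)) ≃L[ℂ] ((K × K) × (K × K)),
        V '' (((⊤ : Submodule ℂ (K × K)).prod (⊥ : Submodule ℂ (K × K))) :
            Set ((K × K) × (K × K))) =
          (((⊤ : Submodule ℂ (K × K)).prod (⊥ : Submodule ℂ (K × K))) :
            Set ((K × K) × (K × K))) ∧
        V '' ((sumDiagGraph (fun n : ℕ => ((n : ℂ) + 1) ^ 2)
            (fun n : ℕ => 1 / ((n : ℂ) + 1) ^ 2)) : Set ((K × K) × (K × K))) =
          ((sumDiagGraph (fun n : ℕ => ((n : ℂ) + 1) ^ 3)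
            (fun n : ℕ => 1 / ((n : ℂ) + 1) ^ 3)) : Set ((K × K) × (K × K))) := by
  rintro ⟨V, hE, hG⟩
  have hG₂₃ : Set.MapsTo V (powGraph 2) (powGraph 3) := Set.mapsTo_iff_image_subset.2 hG.subset
  refine not_leftInverse_of_norm_diagInvPowSnd_le one_le_two (by norm_num)
    (X := graphCoord ∘L (V : _ →L[ℂ] _) ∘L graphParam 2)
    (Y := graphCoord ∘L (V.symm : _ →L[ℂ] _) ∘L graphParam 3) (norm_nonneg _) (norm_nonneg _)
    (norm_diagInvPowSnd_graphCoord_le _ (Set.mapsTo_iff_image_subset.2 hE.subset) hG₂₃)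
    (norm_diagInvPowSnd_graphCoord_le _ (V.toEquiv.mapsTo_symm_of_image_eq hE)
      (V.toEquiv.mapsTo_symm_of_image_eq hG)) fun p => ?_
  simp [graphParam_graphCoord_of_mem (hG₂₃ (graphParam_mem_powGraph 2 p)), graphCoord_graphParam]

end
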